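/- arXiv:1904.11328 — 3 statements merged into one kernel-verified Lean document; each statement's English description precedes it below -/
import Mathlib

section
/- Let α > -1/2, m ∈ ℕ, m ≥ 1, and define ψ_m(λ) = (-1)^m ( j_α(λ) - Σ_{k=0}^{m-1} (-1)^k Γ(α+1)(λ/2)^{2k}/(k! Γ(k+α+1)) ). Then ψ_m(λ) ≥ 0 for all λ ≥ 0. -/
/-!
Write `ψ_m^α` for the tail. Termwise differentiation of the series gives
`(ψ_{m+1}^α)' x = x / (2(α+1)) · ψ_m^{α+1} x` and `ψ_{m+1}^α 0 = 0`, so nonnegativity on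
`[0, ∞)` passes from `(α + 1, m)` to `(α, m + 1)`. The base case `ψ_1^α = 1 - j_α ≥ 0` comes from
the energy `j_α² + (j_α')²`: by Bessel's equation `j_α'' + (2α+1)/x · j_α' + j_α = 0` its derivative
is `-(2α+1)/x · (j_α')² ≤ 0` when `α ≥ -1/2`, so it never exceeds its value `1` at the origin.
-/

open Finset

/-- The normalized Bessel function `j_α`, given by its power series. -/
noncomputable def besselJ (α : ℝ) (x : ℝ) : ℝ :=
  ∑' k : ℕ, (-1 : ℝ) ^ k * Real.Gamma (α + 1) * (x / 2) ^ (2 * k) /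
    ((Nat.factorial k : ℝ) * Real.Gamma ((k : ℝ) + α + 1))

open Set Filter Topology

noncomputable def besselTerm (α x : ℝ) (k : ℕ) : ℝ :=
  (-1 : ℝ) ^ k * Real.Gamma (α + 1) * (x / 2) ^ (2 * k) /
    ((Nat.factorial k : ℝ) * Real.Gamma ((k : ℝ) + α + 1))

lemma besselJ_eq_tsum_besselTerm (α x : ℝ) : besselJ α x = ∑' k, besselTerm α x k := rfl

section Term

variable {α : ℝ} (x : ℝ) (k : ℕ)

lemma Gamma_natCast_add_add_one_pos (hα : -1 < α) : 0 < Real.Gamma (k + α + 1) :=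
  Real.Gamma_pos_of_pos (by linarith [k.cast_nonneg (α := ℝ)])

lemma besselTerm_zero (hα : -1 < α) : besselTerm α x 0 = 1 := by
  have : Real.Gamma (α + 1) ≠ 0 := (Real.Gamma_pos_of_pos (by linarith)).ne'
  simp [besselTerm, this]

lemma besselTerm_at_zero (hk : k ≠ 0) : besselTerm α 0 k = 0 := by
  simp [besselTerm, hk]

lemma besselTerm_succ (hα : -1 < α) :
    besselTerm α x (k + 1) = -(x / 2) ^ 2 / ((k + 1) * (k + α + 1)) * besselTerm α x k := by
  have hk : (k : ℝ) + α + 1 ≠ 0 := by linarith [k.cast_nonneg (α := ℝ)]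
  have hΓ := Gamma_natCast_add_add_one_pos k hα
  rw [besselTerm, besselTerm, Nat.factorial_succ, Nat.cast_succ,
    show (k : ℝ) + 1 + α + 1 = (k + α + 1) + 1 by ring, Real.Gamma_add_one hk]
  push_cast
  field_simp
  ring

lemma besselTerm_add_one (hα : -1 < α) :
    besselTerm (α + 1) x k = (α + 1) / (k + α + 1) * besselTerm α x k := by
  have hk : (k : ℝ) + α + 1 ≠ 0 := by linarith [k.cast_nonneg (α := ℝ)]
  have hΓ := Gamma_natCast_add_add_one_pos k hα
  rw [besselTerm, besselTerm, show (k : ℝ) + (α + 1) + 1 = (k + α + 1) + 1 by ring,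
    Real.Gamma_add_one hk, Real.Gamma_add_one (by linarith)]
  field_simp

lemma abs_besselTerm_le {x y : ℝ} (hxy : |x| ≤ |y|) :
    |besselTerm α x k| ≤ |besselTerm α y k| := by
  simp only [besselTerm, abs_div, abs_mul, abs_pow]
  gcongr

lemma hasDerivAt_besselTerm_succ (hα : -1 < α) :
    HasDerivAt (besselTerm α · (k + 1)) (-(x / (2 * (α + 1))) * besselTerm (α + 1) x k) x := by
  have hfun : (besselTerm α · (k + 1)) = fun y ↦ (-1 : ℝ) ^ (k + 1) * Real.Gamma (α + 1) /
      ((k + 1).factorial * Real.Gamma (((k + 1 : ℕ) : ℝ) + α + 1)) * (y / 2) ^ (2 * (k + 1)) :=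
    funext fun y ↦ mul_div_right_comm _ _ _
  rw [hfun]
  refine (((hasDerivAt_id' x).div_const 2).pow _).const_mul _ |>.congr_deriv ?_
  have hk : (k : ℝ) + α + 1 ≠ 0 := by linarith [k.cast_nonneg (α := ℝ)]
  have hα1 : α + 1 ≠ 0 := by linarith
  have hΓ := Gamma_natCast_add_add_one_pos k hα
  rw [besselTerm_add_one x k hα, besselTerm, show 2 * (k + 1) - 1 = 2 * k + 1 by omega,
    Nat.factorial_succ, Nat.cast_succ, show (k : ℝ) + 1 + α + 1 = (k + α + 1) + 1 by ring,
    Real.Gamma_add_one hk]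
  push_cast
  field_simp
  ring

lemma besselTerm_sub_besselTerm_add_one (hα : -1 < α) :
    besselTerm α x (k + 1) - besselTerm (α + 1) x (k + 1) =
      -(x ^ 2 / (4 * (α + 1) * (α + 2))) * besselTerm (α + 2) x k := by
  have hk : (k : ℝ) + α + 1 ≠ 0 := by linarith [k.cast_nonneg (α := ℝ)]
  have hk' : (k : ℝ) + α + 2 ≠ 0 := by linarith [k.cast_nonneg (α := ℝ)]
  have hα1 : α + 1 ≠ 0 := by linarith
  have hα2 : α + 2 ≠ 0 := by linarith
  rw [show α + 2 = α + 1 + 1 by ring, besselTerm_add_one x k (by linarith),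
    besselTerm_add_one x (k + 1) hα, besselTerm_add_one x k hα, besselTerm_succ x k hα]
  push_cast
  rw [show (k : ℝ) + 1 + α + 1 = k + α + 2 by ring, show (k : ℝ) + (α + 1) + 1 = k + α + 2 by ring,
    show α + 1 + 1 = α + 2 by ring]
  field_simp
  ring

end Term

lemma summable_besselTerm {α : ℝ} (hα : -1 < α) (x : ℝ) : Summable (besselTerm α x) := by
  have hq : Tendsto (fun k : ℕ ↦ (x / 2) ^ 2 / ((k + 1) * (k + α + 1))) atTop (𝓝 0) :=
    tendsto_const_nhds.div_atTop <|
      (tendsto_atTop_add_const_right _ _ tendsto_natCast_atTop_atTop).atTop_mul_atTop₀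
        (tendsto_atTop_add_const_right _ _
          (tendsto_atTop_add_const_right _ _ tendsto_natCast_atTop_atTop))
  refine summable_of_ratio_norm_eventually_le (r := 1 / 2) (by norm_num) ?_
  filter_upwards [hq.eventually (ge_mem_nhds (by norm_num : (0 : ℝ) < 1 / 2))] with k hk
  have hpos : (0 : ℝ) < (k + 1) * (k + α + 1) := by
    have := k.cast_nonneg (α := ℝ)
    exact mul_pos (by linarith) (by linarith)
  rw [besselTerm_succ x k hα, neg_div, neg_mul, norm_neg, norm_mul,
    Real.norm_of_nonneg (by positivity)]
  gcongr

lemma hasDerivAt_besselJ {α : ℝ} (hα : -1 < α) (x : ℝ) :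
    HasDerivAt (besselJ α) (-(x / (2 * (α + 1))) * besselJ (α + 1) x) x := by
  have hα1 : 0 < α + 1 := by linarith
  have hshift : besselJ α = fun y ↦ ∑' k, besselTerm α y (k + 1) + 1 := funext fun y ↦ by
    rw [besselJ_eq_tsum_besselTerm, (summable_besselTerm hα y).tsum_eq_zero_add,
      besselTerm_zero y hα, add_comm]
  set R := |x| + 1
  have hbound : ∀ k, ∀ y ∈ Metric.ball 0 R,
      ‖-(y / (2 * (α + 1))) * besselTerm (α + 1) y k‖ ≤
        R / (2 * (α + 1)) * |besselTerm (α + 1) R k| := by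
    intro k y hy
    rw [mem_ball_zero_iff, Real.norm_eq_abs] at hy
    simp only [norm_mul, norm_neg, norm_div, Real.norm_eq_abs]
    rw [abs_two, abs_of_pos hα1]
    gcongr ?_ * ?_
    · exact div_le_div_of_nonneg_right hy.le (by linarith)
    · exact abs_besselTerm_le k (hy.le.trans (le_abs_self R))
  have h := hasDerivAt_tsum_of_isPreconnected (y₀ := 0)
    (g' := fun k y ↦ -(y / (2 * (α + 1))) * besselTerm (α + 1) y k)
    ((summable_besselTerm (by linarith) R).abs.mul_left _) Metric.isOpen_ball
    (convex_ball 0 R).isPreconnected (fun k y _ ↦ hasDerivAt_besselTerm_succ y k hα) hbound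
    (Metric.mem_ball_self (by positivity)) ((summable_nat_add_iff 1).2 (summable_besselTerm hα 0))
    (mem_ball_zero_iff.2 (by simp [R] : ‖x‖ < R))
  rw [hshift]
  exact (h.add_const 1).congr_deriv (tsum_mul_left ..)

lemma besselJ_at_zero {α : ℝ} (hα : -1 < α) : besselJ α 0 = 1 := by
  rw [besselJ_eq_tsum_besselTerm, tsum_eq_single 0 fun k hk ↦ besselTerm_at_zero k hk,
    besselTerm_zero 0 hα]

lemma besselJ_eq_sub {α : ℝ} (hα : -1 < α) (x : ℝ) :
    besselJ α x = besselJ (α + 1) x - x ^ 2 / (4 * (α + 1) * (α + 2)) * besselJ (α + 2) x := by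
  have hα1 : -1 < α + 1 := by linarith
  have hs := (summable_besselTerm hα x).sub (summable_besselTerm hα1 x)
  have : besselJ α x - besselJ (α + 1) x =
      -(x ^ 2 / (4 * (α + 1) * (α + 2))) * besselJ (α + 2) x :=
    calc besselJ α x - besselJ (α + 1) x
        = ∑' k, (besselTerm α x k - besselTerm (α + 1) x k) :=
          ((summable_besselTerm hα x).tsum_sub (summable_besselTerm hα1 x)).symm
      _ = ∑' k, (besselTerm α x (k + 1) - besselTerm (α + 1) x (k + 1)) := by
          rw [hs.tsum_eq_zero_add, besselTerm_zero x hα, besselTerm_zero x hα1, sub_self,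
            zero_add]
      _ = _ := by
          simp_rw [besselTerm_sub_besselTerm_add_one x _ hα]
          exact tsum_mul_left
  linarith

noncomputable def besselEnergy (α t : ℝ) : ℝ :=
  besselJ α t ^ 2 + (t / (2 * (α + 1)) * besselJ (α + 1) t) ^ 2

lemma hasDerivAt_besselEnergy {α : ℝ} (hα : -1 < α) (t : ℝ) :
    HasDerivAt (besselEnergy α)
      (-((2 * α + 1) * t / (2 * (α + 1) ^ 2)) * besselJ (α + 1) t ^ 2) t := by
  have hJ := hasDerivAt_besselJ hα t
  have hJ₁ := ((hasDerivAt_id' t).div_const (2 * (α + 1))).fun_mul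
    (hasDerivAt_besselJ (by linarith : -1 < α + 1) t)
  refine ((hJ.pow 2).add (hJ₁.pow 2)).congr_deriv ?_
  have hα1 : α + 1 ≠ 0 := by linarith
  have hα2 : α + 2 ≠ 0 := by linarith
  -- Bessel's equation enters through the contiguous relation.
  rw [besselJ_eq_sub hα t, show α + 1 + 1 = α + 2 by ring]
  simp only [Nat.cast_ofNat, Nat.add_one_sub_one, pow_one]
  field_simp
  ring

lemma besselEnergy_at_zero {α : ℝ} (hα : -1 < α) : besselEnergy α 0 = 1 := by
  simp [besselEnergy, besselJ_at_zero hα]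

lemma antitoneOn_besselEnergy {α : ℝ} (hα : -1 / 2 ≤ α) :
    AntitoneOn (besselEnergy α) (Ici 0) := by
  have hE := hasDerivAt_besselEnergy (by linarith : -1 < α)
  refine antitoneOn_of_hasDerivWithinAt_nonpos (convex_Ici 0)
    (fun t _ ↦ (hE t).continuousAt.continuousWithinAt) (fun t _ ↦ (hE t).hasDerivWithinAt)
    fun t ht ↦ ?_
  rw [interior_Ici] at ht
  have : 0 ≤ (2 * α + 1) * t / (2 * (α + 1) ^ 2) :=
    div_nonneg (mul_nonneg (by linarith) ht.le) (by positivity)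
  nlinarith [sq_nonneg (besselJ (α + 1) t)]

lemma abs_besselJ_le_one {α x : ℝ} (hα : -1 / 2 ≤ α) (hx : 0 ≤ x) : |besselJ α x| ≤ 1 := by
  have hE := antitoneOn_besselEnergy hα self_mem_Ici hx hx
  rw [besselEnergy_at_zero (by linarith), besselEnergy] at hE
  exact (sq_le_one_iff_abs_le_one _).1 <| (le_add_of_nonneg_right (sq_nonneg _)).trans hE

noncomputable def besselTail (α : ℝ) (m : ℕ) (x : ℝ) : ℝ :=
  (-1) ^ m * (besselJ α x - ∑ k ∈ range m, besselTerm α x k)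

section Tail

variable {α : ℝ} (m : ℕ)

lemma besselTail_one (hα : -1 < α) (x : ℝ) : besselTail α 1 x = 1 - besselJ α x := by
  rw [besselTail, sum_range_one, besselTerm_zero x hα]
  ring

lemma besselTail_succ_at_zero (hα : -1 < α) : besselTail α (m + 1) 0 = 0 := by
  simp [besselTail, besselJ_at_zero hα, sum_range_succ', besselTerm_zero 0 hα,
    besselTerm_at_zero]

lemma hasDerivAt_sum_besselTerm (hα : -1 < α) (x : ℝ) :
    HasDerivAt (fun y ↦ ∑ k ∈ range (m + 1), besselTerm α y k)
      (-(x / (2 * (α + 1))) * ∑ k ∈ range m, besselTerm (α + 1) x k) x := by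
  have hshift : (fun y ↦ ∑ k ∈ range (m + 1), besselTerm α y k) =
      fun y ↦ ∑ k ∈ range m, besselTerm α y (k + 1) + 1 :=
    funext fun y ↦ by rw [sum_range_succ', besselTerm_zero y hα]
  rw [hshift, mul_sum]
  exact (HasDerivAt.fun_sum fun k _ ↦ hasDerivAt_besselTerm_succ x k hα).add_const 1

lemma hasDerivAt_besselTail_succ (hα : -1 < α) (x : ℝ) :
    HasDerivAt (besselTail α (m + 1)) (x / (2 * (α + 1)) * besselTail (α + 1) m x) x :=
  (((hasDerivAt_besselJ hα x).sub (hasDerivAt_sum_besselTerm m hα x)).const_mul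
    ((-1) ^ (m + 1))).congr_deriv (by rw [besselTail]; ring)

lemma monotoneOn_besselTail_succ (hα : -1 < α)
    (h : ∀ t, 0 ≤ t → 0 ≤ besselTail (α + 1) m t) :
    MonotoneOn (besselTail α (m + 1)) (Ici 0) := by
  have hψ := hasDerivAt_besselTail_succ m hα
  refine monotoneOn_of_hasDerivWithinAt_nonneg (convex_Ici 0)
    (fun t _ ↦ (hψ t).continuousAt.continuousWithinAt) (fun t _ ↦ (hψ t).hasDerivWithinAt)
    fun t ht ↦ ?_
  rw [interior_Ici] at ht
  exact mul_nonneg (div_nonneg ht.le (by linarith)) (h t ht.le)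

end Tail

/-- The alternating tail `ψ_m` of the Bessel series is nonnegative for `λ ≥ 0`. -/
theorem besselJ_tail_nonneg (α : ℝ) (hα : α > -1/2) (m : ℕ) (hm : 1 ≤ m)
    (lam : ℝ) (hlam : 0 ≤ lam) :
    0 ≤ (-1 : ℝ) ^ m * (besselJ α lam -
      ∑ k ∈ Finset.range m, (-1 : ℝ) ^ k * Real.Gamma (α + 1) * (lam / 2) ^ (2 * k) /
        ((Nat.factorial k : ℝ) * Real.Gamma ((k : ℝ) + α + 1))) := by
  change 0 ≤ besselTail α m lam
  induction m, hm using Nat.le_induction generalizing α lam with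
  | base =>
    rw [besselTail_one (by linarith) lam]
    linarith [(abs_le.1 (abs_besselJ_le_one hα.le hlam)).2]
  | succ m _ ih =>
    have hmono := monotoneOn_besselTail_succ m (by linarith)
      fun t ht ↦ ih (α + 1) (by linarith) t ht
    simpa [besselTail_succ_at_zero m (by linarith : -1 < α)] using
      hmono self_mem_Ici hlam hlam
end

section
/- Let α > -1 and φ(t) = j_α(qt) with j_α(q) = 0. There exist sequences of real numbers a_{kj} and b_{kj} (depending only on α and k, j, not on q except through q^{2j}) with a_{kk} = (-1)^k, such that for all k ≥ 0: φ^{(2k+1)}(1) = φ'(1) Σ_{j=0}^k a_{kj} q^{2j} and φ^{(2k+2)}(1) = φ'(1) Σ_{j=0}^k b_{kj} q^{2j}. -/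
open Finset

/-!
`j_α` is an entire power series, so `φ(t) = j_α(qt)` is smooth and solves
`t φ'' + (2α+1) φ' + q² t φ = 0`. Differentiating this equation `n + 1` times and putting `t = 1`
gives `φ^{(n+3)}(1) = -(n+2α+2) φ^{(n+2)}(1) - q² φ^{(n+1)}(1) - (n+1) q² φ^{(n)}(1)`.
Since `φ(1) = 0` and `φ''(1) = -(2α+1) φ'(1)`, induction shows `φ^{(s)}(1) = φ'(1) P_s(q²)` for
polynomials `P_s` whose coefficients depend only on `α`; the recursion raises the degree by one
every second step, so `deg P_s ≤ (s-1)/2`, and the top coefficient of `P_{2k+1}` is `(-1)^k`.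
-/

open scoped ContDiff

theorem iteratedDeriv_iteratedDeriv {𝕜 : Type*} [NontriviallyNormedField 𝕜] (m n : ℕ)
    (f : 𝕜 → 𝕜) : iteratedDeriv m (iteratedDeriv n f) = iteratedDeriv (m + n) f := by
  simp only [iteratedDeriv_eq_iterate, Function.iterate_add_apply]

theorem iteratedDeriv_succ_fun_id_mul {𝕜 : Type*} [NontriviallyNormedField 𝕜] {g : 𝕜 → 𝕜}
    (hg : ContDiff 𝕜 ∞ g) (n : ℕ) (x : 𝕜) :
    iteratedDeriv (n + 1) (fun t => t * g t) x =
      x * iteratedDeriv (n + 1) g x + (n + 1) * iteratedDeriv n g x := by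
  rw [iteratedDeriv_fun_mul contDiffAt_fun_id (hg.contDiffAt.of_le (WithTop.coe_le_coe.2 le_top))]
  simp [sum_range_succ', iteratedDeriv_fun_id]
  ring

section PowerSeries

variable {c : ℕ → ℝ}

def derivCoeff (c : ℕ → ℝ) (n : ℕ) : ℝ := (n + 1) * c (n + 1)

theorem summable_derivCoeff_mul_pow (hc : ∀ x, Summable fun n => c n * x ^ n) (x : ℝ) :
    Summable fun n => derivCoeff c n * x ^ n := by
  obtain ⟨R, hR, hxR⟩ : ∃ R : ℝ, 1 ≤ R ∧ |x| ≤ R := ⟨|x| + 1, by simp, by simp⟩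
  have hbound : Summable fun n => |c (n + 1) * (2 * R) ^ (n + 1)| :=
    ((summable_nat_add_iff 1).2 (hc (2 * R))).abs
  refine hbound.of_norm_bounded fun n => ?_
  have hn : (n : ℝ) + 1 ≤ 2 ^ (n + 1) := by exact_mod_cast Nat.lt_two_pow_self.le
  have hx : |x| ^ n ≤ R ^ (n + 1) :=
    (pow_le_pow_left₀ (abs_nonneg x) hxR n).trans (pow_le_pow_right₀ hR n.le_succ)
  calc ‖derivCoeff c n * x ^ n‖ = |c (n + 1)| * (((n : ℝ) + 1) * |x| ^ n) := by
        rw [Real.norm_eq_abs, derivCoeff, abs_mul, abs_mul, abs_pow, abs_of_nonneg (by positivity)]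
        ring
    _ ≤ |c (n + 1)| * (2 ^ (n + 1) * R ^ (n + 1)) := by gcongr
    _ = |c (n + 1) * (2 * R) ^ (n + 1)| := by
        rw [abs_mul, abs_pow, abs_of_nonneg (by linarith : (0 : ℝ) ≤ 2 * R), mul_pow]

theorem hasDerivAt_tsum_mul_pow (hc : ∀ x, Summable fun n => c n * x ^ n) (x : ℝ) :
    HasDerivAt (fun y => ∑' n, c n * y ^ n) (∑' n, derivCoeff c n * x ^ n) x := by
  obtain ⟨R, hR, hxR⟩ : ∃ R : ℝ, 0 ≤ R ∧ |x| < R := ⟨|x| + 1, by positivity, by simp⟩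
  have hu : Summable fun n => |c n| * n * R ^ (n - 1) := by
    refine (summable_nat_add_iff 1).1 ((summable_derivCoeff_mul_pow hc R).abs.congr fun n => ?_)
    rw [derivCoeff, abs_mul, abs_mul, abs_pow, abs_of_nonneg hR, abs_of_nonneg (by positivity)]
    push_cast
    ring
  have hderiv := hasDerivAt_tsum_of_isPreconnected (g := fun n y => c n * y ^ n)
    (g' := fun n y => c n * (n * y ^ (n - 1))) hu Metric.isOpen_ball
    (convex_ball 0 R).isPreconnected (fun n y _ => (hasDerivAt_pow n y).const_mul (c n))
    (fun n y hy => ?_) (Metric.mem_ball_self ((abs_nonneg x).trans_lt hxR)) (hc 0)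
    (by simpa [Metric.mem_ball] using hxR)
  · have hshift : (fun n => c (n + 1) * ((n + 1 : ℕ) * x ^ (n + 1 - 1))) =
        fun n => derivCoeff c n * x ^ n := funext fun n => by
      rw [derivCoeff, add_tsub_cancel_right]
      push_cast
      ring
    refine hderiv.congr_deriv ?_
    rw [tsum_eq_zero_add' (hshift ▸ summable_derivCoeff_mul_pow hc x), hshift]
    simp
  · rw [Metric.mem_ball, dist_zero_right, Real.norm_eq_abs] at hy
    rw [Real.norm_eq_abs, abs_mul, abs_mul, Nat.abs_cast, abs_pow, mul_assoc]
    gcongr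

theorem deriv_tsum_mul_pow (hc : ∀ x, Summable fun n => c n * x ^ n) :
    deriv (fun y => ∑' n, c n * y ^ n) = fun x => ∑' n, derivCoeff c n * x ^ n :=
  funext fun x => (hasDerivAt_tsum_mul_pow hc x).deriv

theorem contDiff_tsum_mul_pow (hc : ∀ x, Summable fun n => c n * x ^ n) :
    ContDiff ℝ ∞ (fun y => ∑' n, c n * y ^ n) := by
  refine contDiff_infty.2 fun k => ?_
  induction k generalizing c with
  | zero => exact contDiff_zero.2 <|
      continuous_iff_continuousAt.2 fun x => (hasDerivAt_tsum_mul_pow hc x).continuousAt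
  | succ k ih =>
    rw [Nat.cast_succ, contDiff_succ_iff_deriv, deriv_tsum_mul_pow hc]
    exact ⟨fun x => (hasDerivAt_tsum_mul_pow hc x).differentiableAt, by simp,
      ih (summable_derivCoeff_mul_pow hc)⟩

end PowerSeries

def IsBesselODESolution (a b : ℝ) (f : ℝ → ℝ) : Prop :=
  ∀ t, t * iteratedDeriv 2 f t + a * deriv f t + b * (t * f t) = 0

namespace IsBesselODESolution

variable {a b : ℝ} {f : ℝ → ℝ}

theorem of_tsum_mul_pow {c : ℕ → ℝ} (hc : ∀ x, Summable fun n => c n * x ^ n)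
    (hc₁ : c 1 = 0) (hrec : ∀ n : ℕ, (n + 2) * (n + 1 + a) * c (n + 2) = -c n) :
    IsBesselODESolution a 1 fun x => ∑' n, c n * x ^ n := by
  intro x
  have hc' := summable_derivCoeff_mul_pow hc
  rw [iteratedDeriv_succ, iteratedDeriv_one, deriv_tsum_mul_pow hc, deriv_tsum_mul_pow hc']
  have h1 : HasSum (fun n => derivCoeff c (n + 1) * x ^ (n + 1))
      (∑' n, derivCoeff c n * x ^ n) := by
    simpa [derivCoeff, hc₁] using (hasSum_nat_add_iff' 1).2 (hc' x).hasSum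
  have hsum := (((summable_derivCoeff_mul_pow hc' x).hasSum.mul_left x).add (h1.mul_left a)).add
    ((hc x).hasSum.mul_left x)
  have hterm : ∀ n, x * (derivCoeff (derivCoeff c) n * x ^ n)
      + a * (derivCoeff c (n + 1) * x ^ (n + 1)) + x * (c n * x ^ n) = 0 := by
    intro n
    simp only [derivCoeff]
    push_cast
    linear_combination x ^ (n + 1) * hrec n
  simp only [hterm] at hsum
  linear_combination hsum.unique hasSum_zero

theorem comp_const_mul (hode : IsBesselODESolution a b f) (hf : ContDiff ℝ ∞ f) (q : ℝ) :
    IsBesselODESolution a (q ^ 2 * b) fun t => f (q * t) := by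
  intro t
  rw [← iteratedDeriv_one,
    iteratedDeriv_comp_const_mul (n := 1) (hf.of_le (WithTop.coe_le_coe.2 le_top)),
    iteratedDeriv_comp_const_mul (n := 2) (hf.of_le (WithTop.coe_le_coe.2 le_top)),
    iteratedDeriv_one]
  linear_combination q * hode (q * t)

theorem iteratedDeriv_add_three (hode : IsBesselODESolution a b f) (hf : ContDiff ℝ ∞ f)
    (n : ℕ) (t : ℝ) :
    t * iteratedDeriv (n + 3) f t + (n + 1 + a) * iteratedDeriv (n + 2) f t
      + b * (t * iteratedDeriv (n + 1) f t) + (n + 1) * b * iteratedDeriv n f t = 0 := by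
  have hzero : iteratedDeriv (n + 1)
      (fun t => t * iteratedDeriv 2 f t + a * deriv f t + b * (t * f t)) t = 0 := by
    rw [funext hode]
    simp
  have hf₁ : ContDiff ℝ ∞ (deriv f) := hf.iterate_deriv 1
  have hf₂ : ContDiff ℝ ∞ (iteratedDeriv 2 f) := by
    rw [iteratedDeriv_eq_iterate]
    exact hf.iterate_deriv 2
  rw [iteratedDeriv_fun_add, iteratedDeriv_fun_add, iteratedDeriv_const_mul_field,
    iteratedDeriv_const_mul_field, iteratedDeriv_succ_fun_id_mul hf₂,
    iteratedDeriv_succ_fun_id_mul hf, ← iteratedDeriv_one, iteratedDeriv_iteratedDeriv,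
    iteratedDeriv_iteratedDeriv, iteratedDeriv_iteratedDeriv] at hzero
  · linear_combination hzero
  all_goals exact ContDiffAt.of_le (by fun_prop) (WithTop.coe_le_coe.2 le_top)

end IsBesselODESolution

open Polynomial

/-- The recursion is `IsBesselODESolution.iteratedDeriv_add_three` at `t = 1`, solved for the
highest derivative, with `b` as the variable. -/
noncomputable def besselDerivPoly (a : ℝ) : ℕ → ℝ[X]
  | 0 => 0
  | 1 => 1
  | 2 => C (-a)
  | n + 3 => -C (n + 1 + a) * besselDerivPoly a (n + 2)
      - X * (besselDerivPoly a (n + 1) + C (n + 1 : ℝ) * besselDerivPoly a n)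

theorem coeff_besselDerivPoly_of_le (a : ℝ) :
    ∀ s j, s ≤ 2 * j → (besselDerivPoly a s).coeff j = 0
  | 0, _, _ => rfl
  | 1, j, h => by simp [besselDerivPoly, coeff_one, show j ≠ 0 by omega]
  | 2, j, h => by simp [besselDerivPoly, coeff_C, show j ≠ 0 by omega]
  | n + 3, 0, h => by omega
  | n + 3, j + 1, h => by
    simp only [besselDerivPoly, neg_mul, coeff_sub, coeff_neg, coeff_C_mul, coeff_X_mul,
      coeff_add, coeff_besselDerivPoly_of_le a (n + 2) (j + 1) (by omega),
      coeff_besselDerivPoly_of_le a (n + 1) j (by omega),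
      coeff_besselDerivPoly_of_le a n j (by omega)]
    ring

theorem natDegree_besselDerivPoly_le (a : ℝ) (s : ℕ) :
    (besselDerivPoly a s).natDegree ≤ (s - 1) / 2 :=
  natDegree_le_iff_coeff_eq_zero.2 fun _ hj => coeff_besselDerivPoly_of_le a s _ (by omega)

theorem coeff_besselDerivPoly_two_mul_add_one (a : ℝ) :
    ∀ k, (besselDerivPoly a (2 * k + 1)).coeff k = (-1) ^ k
  | 0 => by simp [besselDerivPoly]
  | k + 1 => by
    rw [show 2 * (k + 1) + 1 = 2 * k + 3 by ring]
    simp only [besselDerivPoly, neg_mul, coeff_sub, coeff_neg, coeff_C_mul, coeff_X_mul,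
      coeff_add, coeff_besselDerivPoly_of_le a (2 * k + 2) (k + 1) (by omega),
      coeff_besselDerivPoly_of_le a (2 * k) k (by omega),
      coeff_besselDerivPoly_two_mul_add_one a k]
    ring

theorem IsBesselODESolution.iteratedDeriv_eq_deriv_mul_eval {a b : ℝ} {f : ℝ → ℝ}
    (hode : IsBesselODESolution a b f) (hf : ContDiff ℝ ∞ f) (hf₁ : f 1 = 0) :
    ∀ s, iteratedDeriv s f 1 = deriv f 1 * (besselDerivPoly a s).eval b
  | 0 => by simp [besselDerivPoly, hf₁]
  | 1 => by simp [besselDerivPoly]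
  | 2 => by
    have h := hode 1
    simp only [one_mul, hf₁, mul_zero, add_zero] at h
    simp only [besselDerivPoly, eval_C]
    linear_combination h
  | n + 3 => by
    have h := hode.iteratedDeriv_add_three hf n 1
    rw [hode.iteratedDeriv_eq_deriv_mul_eval hf hf₁ (n + 2),
      hode.iteratedDeriv_eq_deriv_mul_eval hf hf₁ (n + 1),
      hode.iteratedDeriv_eq_deriv_mul_eval hf hf₁ n] at h
    simp only [besselDerivPoly, eval_sub, eval_neg, eval_mul, eval_C, eval_X, eval_add]
    linear_combination h

section BesselSeries

variable {a : ℝ}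

/-- The coefficients of the power series solution of `x f'' + a f' + x f = 0` with `f 0 = 1`;
for `-1 < a` no denominator vanishes. -/
noncomputable def besselSeriesCoeff (a : ℝ) : ℕ → ℝ
  | 0 => 1
  | 1 => 0
  | n + 2 => -besselSeriesCoeff a n / ((n + 2) * (n + 1 + a))

theorem besselSeriesCoeff_two_mul_add_one (a : ℝ) : ∀ k, besselSeriesCoeff a (2 * k + 1) = 0
  | 0 => rfl
  | k + 1 => by
    rw [show 2 * (k + 1) + 1 = 2 * k + 1 + 2 by ring, besselSeriesCoeff,
      besselSeriesCoeff_two_mul_add_one a k, neg_zero, zero_div]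

theorem besselSeriesCoeff_add_two (ha : -1 < a) (n : ℕ) :
    (n + 2) * (n + 1 + a) * besselSeriesCoeff a (n + 2) = -besselSeriesCoeff a n := by
  have : (n : ℝ) + 1 + a ≠ 0 := by linarith [n.cast_nonneg (α := ℝ)]
  rw [besselSeriesCoeff]
  field_simp

theorem summable_besselSeriesCoeff_mul_pow (ha : -1 < a) (x : ℝ) :
    Summable fun n => besselSeriesCoeff a n * x ^ n := by
  refine .even_add_odd ?_ (by simp [besselSeriesCoeff_two_mul_add_one])
  refine summable_of_ratio_norm_eventually_le (r := 1 / 2) (by norm_num) ?_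
  filter_upwards [Filter.eventually_ge_atTop ⌈x ^ 2⌉₊] with k hk
  have hxk : x ^ 2 ≤ k := Nat.ceil_le.1 hk
  have hk0 : (0 : ℝ) ≤ k := k.cast_nonneg
  have hpos : 0 < (2 * k + 2) * (2 * k + 1 + a) := by nlinarith
  have hratio : x ^ 2 / ((2 * k + 2) * (2 * k + 1 + a)) ≤ 1 / 2 := by
    rw [div_le_iff₀ hpos]
    nlinarith
  have hstep : besselSeriesCoeff a (2 * (k + 1)) * x ^ (2 * (k + 1)) =
      besselSeriesCoeff a (2 * k) * x ^ (2 * k) * -(x ^ 2 / ((2 * k + 2) * (2 * k + 1 + a))) := by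
    rw [show 2 * (k + 1) = 2 * k + 2 by ring, besselSeriesCoeff]
    push_cast
    ring
  calc ‖besselSeriesCoeff a (2 * (k + 1)) * x ^ (2 * (k + 1))‖
      = ‖besselSeriesCoeff a (2 * k) * x ^ (2 * k)‖ *
          (x ^ 2 / ((2 * k + 2) * (2 * k + 1 + a))) := by
        rw [hstep, norm_mul, norm_neg, Real.norm_of_nonneg (div_nonneg (sq_nonneg x) hpos.le)]
    _ ≤ ‖besselSeriesCoeff a (2 * k) * x ^ (2 * k)‖ * (1 / 2) :=
        mul_le_mul_of_nonneg_left hratio (norm_nonneg _)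
    _ = 1 / 2 * ‖besselSeriesCoeff a (2 * k) * x ^ (2 * k)‖ := mul_comm _ _

end BesselSeries

section BesselJ

variable {α : ℝ}

theorem besselSeriesCoeff_two_mul (hα : -1 < α) (k : ℕ) :
    besselSeriesCoeff (2 * α + 1) (2 * k) =
      (-1) ^ k * Real.Gamma (α + 1) / (4 ^ k * k.factorial * Real.Gamma (k + α + 1)) := by
  induction k with
  | zero => simp [besselSeriesCoeff, (Real.Gamma_pos_of_pos (by linarith : 0 < α + 1)).ne']
  | succ k ih =>
    have hk : (k : ℝ) + α + 1 ≠ 0 := by linarith [k.cast_nonneg (α := ℝ)]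
    have hΓ : Real.Gamma (k + α + 1) ≠ 0 :=
      (Real.Gamma_pos_of_pos (by linarith [k.cast_nonneg (α := ℝ)])).ne'
    rw [show 2 * (k + 1) = 2 * k + 2 by ring, besselSeriesCoeff, ih, Nat.cast_succ,
      show (k : ℝ) + 1 + α + 1 = (k + α + 1) + 1 by ring, Real.Gamma_add_one hk,
      Nat.factorial_succ]
    push_cast
    have hd : (2 * k + 2) * (2 * k + 1 + (2 * α + 1)) ≠ (0 : ℝ) := by
      rw [show (2 * k + 2) * (2 * k + 1 + (2 * α + 1)) = 4 * ((k + 1) * (k + α + 1)) by ring]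
      positivity
    rw [neg_div, div_div, ← neg_div, div_eq_div_iff (by positivity) (by positivity)]
    ring

theorem besselJ_eq_tsum (hα : -1 < α) :
    besselJ α = fun x => ∑' n, besselSeriesCoeff (2 * α + 1) n * x ^ n := by
  funext x
  have hs := summable_besselSeriesCoeff_mul_pow (by linarith : -1 < 2 * α + 1) x
  have heven : Summable fun k => besselSeriesCoeff (2 * α + 1) (2 * k) * x ^ (2 * k) :=
    hs.comp_injective (mul_right_injective₀ two_ne_zero)
  have hodd : Summable fun k => besselSeriesCoeff (2 * α + 1) (2 * k + 1) * x ^ (2 * k + 1) := by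
    simp only [besselSeriesCoeff_two_mul_add_one, zero_mul, summable_zero]
  refine Eq.trans ?_ (tsum_even_add_odd heven hodd)
  simp only [besselSeriesCoeff_two_mul_add_one, zero_mul, tsum_zero, add_zero]
  refine tsum_congr fun k => ?_
  rw [besselSeriesCoeff_two_mul hα, div_pow, pow_mul, pow_mul]
  norm_num
  ring

theorem contDiff_besselJ (hα : -1 < α) : ContDiff ℝ ∞ (besselJ α) :=
  besselJ_eq_tsum hα ▸ contDiff_tsum_mul_pow (summable_besselSeriesCoeff_mul_pow (by linarith))

theorem isBesselODESolution_besselJ (hα : -1 < α) :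
    IsBesselODESolution (2 * α + 1) 1 (besselJ α) :=
  besselJ_eq_tsum hα ▸ .of_tsum_mul_pow (summable_besselSeriesCoeff_mul_pow (by linarith)) rfl
    (besselSeriesCoeff_add_two (by linarith))

end BesselJ

/-- There are coefficients `a_{kj}`, `b_{kj}` depending only on `α` (not on `q`),
with `a_{kk} = (-1)^k`, such that for every positive zero `q` of `j_α` and
`φ(t) = j_α(qt)`: `φ^{(2k+1)}(1) = φ'(1) Σ_{j=0}^k a_{kj} q^{2j}` and
`φ^{(2k+2)}(1) = φ'(1) Σ_{j=0}^k b_{kj} q^{2j}`. -/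
theorem besselJ_odd_even_derivatives (α : ℝ) (hα : α > -1) :
    ∃ a b : ℕ → ℕ → ℝ, (∀ k, a k k = (-1 : ℝ) ^ k) ∧
      ∀ q : ℝ, 0 < q → besselJ α q = 0 → ∀ k : ℕ,
        iteratedDeriv (2 * k + 1) (fun t : ℝ => besselJ α (q * t)) 1 =
          deriv (fun t : ℝ => besselJ α (q * t)) 1 *
            ∑ j ∈ Finset.range (k + 1), a k j * q ^ (2 * j) ∧
        iteratedDeriv (2 * k + 2) (fun t : ℝ => besselJ α (q * t)) 1 =
          deriv (fun t : ℝ => besselJ α (q * t)) 1 *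
            ∑ j ∈ Finset.range (k + 1), b k j * q ^ (2 * j) := by
  refine ⟨fun k j => (besselDerivPoly (2 * α + 1) (2 * k + 1)).coeff j,
    fun k j => (besselDerivPoly (2 * α + 1) (2 * k + 2)).coeff j,
    coeff_besselDerivPoly_two_mul_add_one _, fun q _ hq k => ?_⟩
  have hf := contDiff_besselJ hα
  have hφ := (isBesselODESolution_besselJ hα).comp_const_mul hf q
  have hderiv := hφ.iteratedDeriv_eq_deriv_mul_eval (hf.comp (contDiff_const.mul contDiff_id))
    (by simpa using hq)
  have heval : ∀ s, (s - 1) / 2 < k + 1 →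
      (besselDerivPoly (2 * α + 1) s).eval (q ^ 2 * 1) =
        ∑ j ∈ range (k + 1), (besselDerivPoly (2 * α + 1) s).coeff j * q ^ (2 * j) := by
    intro s hs
    simp only [eval_eq_sum_range' ((natDegree_besselDerivPoly_le _ s).trans_lt hs), mul_one,
      pow_mul]
  exact ⟨by rw [hderiv, heval _ (by omega)], by rw [hderiv, heval _ (by omega)]⟩
end

section
/- Let α > -1 and β > α. Then for all λ ≥ 0, j_β(λ) = (b_β^{-1}/(2^{β-α-1} Γ(β-α))) ∫_0^1 (1-t²)^{β-α-1} j_α(λt) b_α t^{2α+1} dt, where b_γ^{-1} = 2^γ Γ(γ+1). -/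
open MeasureTheory Set Filter Topology ProbabilityTheory

section BetaIntegral

variable {a b : ℝ}

lemma ofReal_cpow_mul_one_sub_cpow {x : ℝ} (hx : x ∈ Ioo (0 : ℝ) 1) :
    (x : ℂ) ^ ((a : ℂ) - 1) * (1 - (x : ℂ)) ^ ((b : ℂ) - 1)
      = ((x ^ (a - 1) * (1 - x) ^ (b - 1) : ℝ) : ℂ) := by
  rw [Complex.ofReal_mul, Complex.ofReal_cpow hx.1.le,
    Complex.ofReal_cpow (sub_nonneg.2 hx.2.le)]
  push_cast
  rfl

lemma betaIntegral_ofReal_eq_integral :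
    Complex.betaIntegral a b =
      ∫ x in Ioo (0 : ℝ) 1, ((x ^ (a - 1) * (1 - x) ^ (b - 1) : ℝ) : ℂ) := by
  rw [Complex.betaIntegral, intervalIntegral.integral_of_le zero_le_one,
    integral_Ioc_eq_integral_Ioo]
  exact setIntegral_congr_fun measurableSet_Ioo fun x hx => ofReal_cpow_mul_one_sub_cpow hx

lemma integrableOn_rpow_mul_one_sub_rpow (ha : 0 < a) (hb : 0 < b) :
    IntegrableOn (fun x : ℝ => x ^ (a - 1) * (1 - x) ^ (b - 1)) (Ioo 0 1) := by
  have h := Complex.betaIntegral_convergent (u := a) (v := b) (by simpa) (by simpa)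
  rw [intervalIntegrable_iff_integrableOn_Ioc_of_le zero_le_one] at h
  refine IntegrableOn.congr_fun (h.mono_set Ioo_subset_Ioc_self).re (fun x hx => ?_)
    measurableSet_Ioo
  rw [ofReal_cpow_mul_one_sub_cpow hx, RCLike.re_to_complex, Complex.ofReal_re]

lemma integral_rpow_mul_one_sub_rpow (ha : 0 < a) (hb : 0 < b) :
    ∫ x in Ioo (0 : ℝ) 1, x ^ (a - 1) * (1 - x) ^ (b - 1) = beta a b := by
  rw [beta_eq_betaIntegralReal a b ha hb, betaIntegral_ofReal_eq_integral, integral_complex_ofReal,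
    Complex.ofReal_re]

end BetaIntegral

section SquareSubstitution

variable {E : Type*} [NormedAddCommGroup E] [NormedSpace ℝ E]

lemma image_sq_Ioo_zero_one : (fun t : ℝ => t ^ 2) '' Ioo 0 1 = Ioo 0 1 := by
  ext s
  constructor
  · rintro ⟨t, ⟨ht0, ht1⟩, rfl⟩
    exact ⟨by positivity, by nlinarith⟩
  · rintro ⟨hs0, hs1⟩
    refine ⟨√s, ⟨Real.sqrt_pos.2 hs0, ?_⟩, Real.sq_sqrt hs0.le⟩
    rwa [Real.sqrt_lt' one_pos, one_pow]

lemma hasDerivWithinAt_sq_Ioo (x : ℝ) :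
    HasDerivWithinAt (fun t : ℝ => t ^ 2) (2 * x) (Ioo 0 1) x := by
  simpa using (hasDerivAt_pow 2 x).hasDerivWithinAt

lemma injOn_sq_Ioo : InjOn (fun t : ℝ => t ^ 2) (Ioo 0 1) :=
  (pow_left_strictMonoOn₀ two_ne_zero).injOn.mono fun _ hx => hx.1.le

lemma abs_two_mul_smul_Ioo (g : ℝ → E) :
    EqOn (fun t : ℝ => |2 * t| • g (t ^ 2)) (fun t => (2 * t) • g (t ^ 2)) (Ioo 0 1) :=
  fun t ht => by simp only [abs_of_pos (by linarith [ht.1] : (0 : ℝ) < 2 * t)]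

lemma integrableOn_Ioo_iff_comp_sq (g : ℝ → E) :
    IntegrableOn g (Ioo 0 1) ↔ IntegrableOn (fun t => (2 * t) • g (t ^ 2)) (Ioo 0 1) := by
  rw [← integrableOn_congr_fun (abs_two_mul_smul_Ioo g) measurableSet_Ioo]
  conv_lhs => rw [← image_sq_Ioo_zero_one]
  exact integrableOn_image_iff_integrableOn_abs_deriv_smul measurableSet_Ioo
    (fun x _ => hasDerivWithinAt_sq_Ioo x) injOn_sq_Ioo g

lemma integral_Ioo_eq_integral_comp_sq (g : ℝ → E) :
    ∫ s in Ioo 0 1, g s = ∫ t in Ioo 0 1, (2 * t) • g (t ^ 2) := by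
  rw [← setIntegral_congr_fun measurableSet_Ioo (abs_two_mul_smul_Ioo g)]
  conv_lhs => rw [← image_sq_Ioo_zero_one]
  exact integral_image_eq_integral_abs_deriv_smul measurableSet_Ioo
    (fun x _ => hasDerivWithinAt_sq_Ioo x) injOn_sq_Ioo g

end SquareSubstitution

section SonineMoment

variable {a b : ℝ}

lemma two_mul_smul_sq_rpow_mul_one_sub_sq_rpow {t : ℝ} (ht : t ∈ Ioo (0 : ℝ) 1) :
    (2 * t) • ((t ^ 2) ^ (a - 1) * (1 - t ^ 2) ^ (b - 1))
      = 2 * ((1 - t ^ 2) ^ (b - 1) * t ^ (2 * a - 1)) := by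
  have hsq : (t ^ 2) ^ (a - 1) * t = t ^ (2 * a - 1) := by
    rw [← Real.rpow_natCast, ← Real.rpow_mul ht.1.le, ← Real.rpow_add_one ht.1.ne']
    ring_nf
  rw [smul_eq_mul, ← hsq]
  ring

lemma integrableOn_one_sub_sq_rpow_mul_rpow (ha : 0 < a) (hb : 0 < b) :
    IntegrableOn (fun t : ℝ => (1 - t ^ 2) ^ (b - 1) * t ^ (2 * a - 1)) (Ioo 0 1) := by
  have h := (integrableOn_Ioo_iff_comp_sq _).1 (integrableOn_rpow_mul_one_sub_rpow ha hb)
  refine IntegrableOn.congr_fun (h.const_mul 2⁻¹) (fun t ht => ?_) measurableSet_Ioo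
  rw [two_mul_smul_sq_rpow_mul_one_sub_sq_rpow ht]
  ring

lemma integral_one_sub_sq_rpow_mul_rpow (ha : 0 < a) (hb : 0 < b) :
    ∫ t in Ioo (0 : ℝ) 1, (1 - t ^ 2) ^ (b - 1) * t ^ (2 * a - 1) = beta a b / 2 := by
  rw [← integral_rpow_mul_one_sub_rpow ha hb, integral_Ioo_eq_integral_comp_sq
    (fun x => x ^ (a - 1) * (1 - x) ^ (b - 1)),
    setIntegral_congr_fun measurableSet_Ioo
      (fun t ht => two_mul_smul_sq_rpow_mul_one_sub_sq_rpow ht), integral_const_mul]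
  ring

end SonineMoment

lemma integral_tsum_mul_of_nonneg {ι X : Type*} [Countable ι] [MeasurableSpace X]
    {μ : Measure X} {a : ι → ℝ} {g : ι → X → ℝ} (hg : ∀ i, Integrable (g i) μ)
    (hg0 : ∀ i, 0 ≤ᵐ[μ] g i) (hs : Summable fun i => |a i| * ∫ x, g i x ∂μ) :
    ∫ x, ∑' i, a i * g i x ∂μ = ∑' i, a i * ∫ x, g i x ∂μ := by
  have hnorm (i : ι) : ∫ x, ‖a i * g i x‖ ∂μ = |a i| * ∫ x, g i x ∂μ := by
    rw [← integral_const_mul]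
    refine integral_congr_ae ?_
    filter_upwards [hg0 i] with x hx
    rw [norm_mul, Real.norm_eq_abs, Real.norm_of_nonneg hx]
  simp_rw [← integral_const_mul]
  exact (integral_tsum_of_summable_integral_norm (fun i => (hg i).const_mul (a i))
    (by simpa only [hnorm] using hs)).symm

section BesselSeries

variable {α : ℝ}

noncomputable def besselJTerm (α x : ℝ) (k : ℕ) : ℝ :=
  (-1 : ℝ) ^ k * Real.Gamma (α + 1) * (x / 2) ^ (2 * k) /
    ((Nat.factorial k : ℝ) * Real.Gamma ((k : ℝ) + α + 1))

lemma besselJ_eq_tsum_s19 (α x : ℝ) : besselJ α x = ∑' k, besselJTerm α x k := rfl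

lemma besselJTerm_mul (α x t : ℝ) (k : ℕ) :
    besselJTerm α (x * t) k = besselJTerm α x k * t ^ (2 * k) := by
  simp only [besselJTerm, mul_div_right_comm x t, mul_pow]
  ring

lemma mul_besselJ_mul_rpow_eq_tsum (α c e x : ℝ) {t : ℝ} (ht : 0 < t) :
    (1 - t ^ 2) ^ c * besselJ α (x * t) * (e * t ^ (2 * α + 1)) =
      ∑' k : ℕ, besselJTerm α x k * e *
        ((1 - t ^ 2) ^ c * t ^ (2 * ((k : ℝ) + α + 1) - 1)) := by
  rw [besselJ_eq_tsum_s19, ← tsum_mul_left, ← tsum_mul_right]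
  refine tsum_congr fun k => ?_
  have hpow : t ^ (2 * k) * t ^ (2 * α + 1) = t ^ (2 * ((k : ℝ) + α + 1) - 1) := by
    rw [← Real.rpow_natCast, ← Real.rpow_add ht]
    push_cast
    ring_nf
  rw [besselJTerm_mul, ← hpow]
  ring

lemma besselJTerm_succ (hα : -1 < α) (x : ℝ) (k : ℕ) :
    besselJTerm α x (k + 1)
      = -besselJTerm α x k * ((x / 2) ^ 2 / ((k + 1) * (k + α + 1))) := by
  have hk : 0 < (k : ℝ) + α + 1 := by linarith [k.cast_nonneg (α := ℝ)]
  have hΓ : Real.Gamma ((↑(k + 1) : ℝ) + α + 1) = (k + α + 1) * Real.Gamma (k + α + 1) := by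
    rw [← Real.Gamma_add_one hk.ne']
    push_cast
    ring_nf
  have := (Real.Gamma_pos_of_pos hk).ne'
  simp only [besselJTerm, hΓ, Nat.factorial_succ]
  push_cast
  field_simp
  ring

lemma summable_abs_besselJTerm (hα : -1 < α) (x : ℝ) :
    Summable fun k => |besselJTerm α x k| := by
  have hratio :
      Tendsto (fun k : ℕ => |(x / 2) ^ 2 / ((k + 1) * (k + α + 1))|) atTop (𝓝 0) := by
    simpa using (tendsto_const_nhds.div_atTop <| Tendsto.atTop_mul_atTop₀
      (tendsto_atTop_add_const_right _ _ (tendsto_natCast_atTop_atTop (R := ℝ)))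
      (tendsto_atTop_add_const_right _ _
        (tendsto_atTop_add_const_right _ _ (tendsto_natCast_atTop_atTop (R := ℝ))))).abs
  refine summable_of_ratio_norm_eventually_le (r := 1 / 2) (by norm_num) ?_
  filter_upwards [hratio.eventually (ge_mem_nhds (one_half_pos (α := ℝ)))] with k hk
  rw [Real.norm_eq_abs, Real.norm_eq_abs, abs_abs, abs_abs, besselJTerm_succ hα, abs_mul,
    abs_neg, mul_comm (1 / 2)]
  exact mul_le_mul_of_nonneg_left hk (abs_nonneg _)

lemma besselJTerm_eq_mul_beta {β : ℝ} (hα : -1 < α) (hαβ : α < β) (x : ℝ) (k : ℕ) :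
    besselJTerm β x k =
      (2 : ℝ) ^ β * Real.Gamma (β + 1) / ((2 : ℝ) ^ (β - α - 1) * Real.Gamma (β - α)) *
        (besselJTerm α x k * ((2 : ℝ) ^ α * Real.Gamma (α + 1))⁻¹ *
          (beta ((k : ℝ) + α + 1) (β - α) / 2)) := by
  have h2 : (2 : ℝ) ^ (β - α - 1) * 2 ^ α * 2 = 2 ^ β := by
    rw [← Real.rpow_add two_pos, ← Real.rpow_add_one two_ne_zero]
    ring_nf
  have hk : 0 < (k : ℝ) + α + 1 := by linarith [k.cast_nonneg (α := ℝ)]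
  have := (Real.Gamma_pos_of_pos hk).ne'
  have := (Real.Gamma_pos_of_pos (by linarith : 0 < α + 1)).ne'
  have := (Real.Gamma_pos_of_pos (by linarith : 0 < β + 1)).ne'
  have := (Real.Gamma_pos_of_pos (by linarith : 0 < (k : ℝ) + β + 1)).ne'
  have := (Real.Gamma_pos_of_pos (sub_pos.2 hαβ)).ne'
  simp only [besselJTerm, beta, show (k : ℝ) + α + 1 + (β - α) = k + β + 1 by ring, ← h2]
  field_simp

lemma summable_abs_besselJTerm_mul_beta {β : ℝ} (hα : -1 < α) (hαβ : α < β) (x : ℝ) :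
    Summable fun k : ℕ => |besselJTerm α x k * ((2 : ℝ) ^ α * Real.Gamma (α + 1))⁻¹| *
      (beta ((k : ℝ) + α + 1) (β - α) / 2) := by
  have hC : 0 < (2 : ℝ) ^ β * Real.Gamma (β + 1) /
      ((2 : ℝ) ^ (β - α - 1) * Real.Gamma (β - α)) := by
    have := Real.Gamma_pos_of_pos (by linarith : 0 < β + 1)
    have := Real.Gamma_pos_of_pos (sub_pos.2 hαβ)
    positivity
  refine (summable_mul_left_iff hC.ne').1 <|
    (summable_abs_besselJTerm (hα.trans hαβ) x).congr fun k => ?_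
  have hB := beta_pos (by linarith [k.cast_nonneg (α := ℝ)] : 0 < (k : ℝ) + α + 1)
    (sub_pos.2 hαβ)
  rw [besselJTerm_eq_mul_beta hα hαβ, abs_mul, abs_mul (_ * _), abs_of_pos hC,
    abs_of_pos (half_pos hB)]

end BesselSeries

theorem sonine_first_integral_general (α β : ℝ) (hα : α > -1) (hβ : β > α) (lam : ℝ) :
    besselJ β lam =
      ((2 : ℝ) ^ β * Real.Gamma (β + 1)) / ((2 : ℝ) ^ (β - α - 1) * Real.Gamma (β - α)) *
        ∫ t in (0:ℝ)..1, (1 - t ^ 2) ^ (β - α - 1) * besselJ α (lam * t) *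
          (((2 : ℝ) ^ α * Real.Gamma (α + 1))⁻¹ * t ^ (2 * α + 1)) := by
  have hb : 0 < β - α := sub_pos.2 hβ
  have ha (k : ℕ) : 0 < (k : ℝ) + α + 1 := by linarith [k.cast_nonneg (α := ℝ)]
  have hmoment (k : ℕ) := integral_one_sub_sq_rpow_mul_rpow (ha k) hb
  have hweight_nonneg (k : ℕ) : 0 ≤ᵐ[volume.restrict (Ioo 0 1)]
      fun t : ℝ => (1 - t ^ 2) ^ (β - α - 1) * t ^ (2 * ((k : ℝ) + α + 1) - 1) :=
    ae_restrict_of_forall_mem measurableSet_Ioo fun t ht =>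
      mul_nonneg (Real.rpow_nonneg (by nlinarith [ht.1, ht.2]) _) (Real.rpow_nonneg ht.1.le _)
  rw [intervalIntegral.integral_of_le zero_le_one, integral_Ioc_eq_integral_Ioo,
    setIntegral_congr_fun measurableSet_Ioo fun t ht => mul_besselJ_mul_rpow_eq_tsum _ _ _ _ ht.1,
    integral_tsum_mul_of_nonneg (fun k => integrableOn_one_sub_sq_rpow_mul_rpow (ha k) hb)
      hweight_nonneg (by simpa only [hmoment] using summable_abs_besselJTerm_mul_beta hα hβ lam),
    ← tsum_mul_left, besselJ_eq_tsum_s19]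
  exact tsum_congr fun k => by rw [hmoment, besselJTerm_eq_mul_beta hα hβ]

/-- Sonine's first integral: for `β > α > -1` and `λ ≥ 0`,
`j_β(λ) = (b_β⁻¹/(2^{β-α-1} Γ(β-α))) ∫_0^1 (1-t²)^{β-α-1} j_α(λt) b_α t^{2α+1} dt`,
where `b_γ⁻¹ = 2^γ Γ(γ+1)`. -/
theorem sonine_first_integral (α β : ℝ) (hα : α > -1) (hβ : β > α) (lam : ℝ)
    (hlam : 0 ≤ lam) :
    besselJ β lam =
      ((2 : ℝ) ^ β * Real.Gamma (β + 1)) / ((2 : ℝ) ^ (β - α - 1) * Real.Gamma (β - α)) *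
        ∫ t in (0:ℝ)..1, (1 - t ^ 2) ^ (β - α - 1) * besselJ α (lam * t) *
          (((2 : ℝ) ^ α * Real.Gamma (α + 1))⁻¹ * t ^ (2 * α + 1)) :=
  sonine_first_integral_general α β hα hβ lam
end
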